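/- arXiv:2604.13819 — 2 statements merged into one kernel-verified Lean document; each statement's English description precedes it below -/
import Mathlib

section
/- For t ∈ ℝ \ ℤ_{≥0} and each i ∈ ℤ_{≥1}, there exists a polynomial F_i in i−1 variables (depending only on t and i) such that for every A ∈ U = 1 + zℝ⟦z⟧, κ_i^t(A) = (t^{i−1}/(t)_i) p_i(A) + F_i(p_1(A), …, p_{i−1}(A)); that is, the i-th t-deformed cumulant is a polynomial in the power sums p_1(A), …, p_i(A) with leading term (t^{i−1}/(t)_i) p_i(A). -/
open PowerSeries Finset

/-- Falling factorial `(t)_k = t (t-1) ⋯ (t-k+1)`. -/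
noncomputable def ffall (t : ℝ) (k : ℕ) : ℝ := ∏ i ∈ Finset.range k, (t - i)

/-- The `t`-deformed convolution of formal power series. -/
noncomputable def tconv (t : ℝ) (A B : PowerSeries ℝ) : PowerSeries ℝ :=
  PowerSeries.mk fun k => ∑ p ∈ Finset.HasAntidiagonal.antidiagonal k,
    ffall t k / (ffall t p.1 * ffall t p.2)
      * (PowerSeries.coeff p.1 A) * (PowerSeries.coeff p.2 B)

/-- Formal logarithm of a power series (with constant term 1):
`log A = - Σ_{k ≥ 1} (1 - A)^k / k`. -/
noncomputable def flog (A : PowerSeries ℝ) : PowerSeries ℝ :=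
  PowerSeries.mk fun n =>
    -∑ k ∈ Finset.range (n + 1), (PowerSeries.coeff (R := ℝ) n ((1 - A) ^ k)) / k

/-- Power sums of `A ∈ 1 + zℝ⟦z⟧`, defined by `Σ p_k(A) z^k = -z (d/dz) log A(z)`. -/
noncomputable def powSum (A : PowerSeries ℝ) (k : ℕ) : ℝ :=
  -(k : ℝ) * PowerSeries.coeff k (flog A)

/-- `E^t[A](z) = Σ_k (t^k/(t)_k) a_k z^k`. -/
noncomputable def Et (t : ℝ) (A : PowerSeries ℝ) : PowerSeries ℝ :=
  PowerSeries.mk fun k => t ^ k / ffall t k * PowerSeries.coeff k A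

/-- The `t`-deformed cumulant transform `C^t[A](z) = -(z/t)(d/dz) log(E^t[A](z))`. -/
noncomputable def Ct (t : ℝ) (A : PowerSeries ℝ) : PowerSeries ℝ :=
  PowerSeries.mk fun n => -(1 / t) * ((n : ℝ) * PowerSeries.coeff n (flog (Et t A)))

/-- The `i`-th `t`-deformed cumulant of `A`. -/
noncomputable def kappa (t : ℝ) (A : PowerSeries ℝ) (i : ℕ) : ℝ :=
  PowerSeries.coeff i (Ct t A)

/-! Differentiating the logarithm gives `A · (log A)' = A'`, which coefficientwise is Newton's
identity `p_{n+1} + (n+1) a_{n+1} = -∑_{j<n} a_{j+1} p_{n-j}`; by induction every coefficient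
`a_n` is then a polynomial in `p_1, …, p_n`. The coefficients of `E^t[A]` are `c_j a_j` with
`c_j = t^j/(t)_j`, so subtracting `c_{n+1}` times Newton's identity for `A` from the one for
`E^t[A]` eliminates `a_{n+1}`: `p_{n+1}(E^t[A]) - c_{n+1} p_{n+1}(A)` is a polynomial in the
`a_j(A)`, `p_k(A)` and `p_k(E^t[A])` with `j, k ≤ n`, hence, by strong induction, in
`p_1(A), …, p_n(A)`. Finally `κ_{n+1}^t(A) = p_{n+1}(E^t[A]) / t`. -/

lemma PowerSeries.coeff_pow_eq_zero_of_lt {R : Type*} [CommSemiring R] {u : R⟦X⟧}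
    (hu : constantCoeff u = 0) {n k : ℕ} (h : n < k) : coeff n (u ^ k) = 0 :=
  X_pow_dvd_iff.mp (pow_dvd_pow_of_dvd (X_dvd_iff.mpr hu) k) n h

lemma PowerSeries.X_pow_dvd_derivative {R : Type*} [CommSemiring R] {f : R⟦X⟧} {N : ℕ}
    (h : X ^ (N + 1) ∣ f) : X ^ N ∣ d⁄dX R f := by
  rw [X_pow_dvd_iff] at h ⊢
  intro i hi
  rw [coeff_derivative, h (i + 1) (by omega), zero_mul]

noncomputable def flogPartial (A : ℝ⟦X⟧) (N : ℕ) : ℝ⟦X⟧ :=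
  ∑ k ∈ range (N + 1), (-(k : ℝ)⁻¹) • (1 - A) ^ k

lemma X_pow_dvd_flog_sub_flogPartial {A : ℝ⟦X⟧} (hA : constantCoeff A = 1) (N : ℕ) :
    X ^ (N + 1) ∣ flog A - flogPartial A N := by
  have hu : constantCoeff (1 - A) = 0 := by simp [hA]
  rw [X_pow_dvd_iff]
  intro n hn
  rw [map_sub, sub_eq_zero, flog, coeff_mk, flogPartial, map_sum, ← sum_neg_distrib]
  refine (sum_subset (range_subset_range.mpr (by omega)) fun k _ hk => ?_).trans
    (sum_congr rfl fun k _ => ?_)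
  · rw [coeff_pow_eq_zero_of_lt hu (by simp at hk; omega), zero_div, neg_zero]
  · rw [coeff_smul, smul_eq_mul]; ring

lemma derivative_flogPartial (A : ℝ⟦X⟧) (N : ℕ) :
    d⁄dX ℝ (flogPartial A N) = (∑ k ∈ range N, (1 - A) ^ k) * d⁄dX ℝ A := by
  induction N with
  | zero => simp [flogPartial]
  | succ N ih =>
    rw [flogPartial, sum_range_succ, map_add, ← flogPartial, ih, sum_range_succ,
      Derivation.map_smul, derivative_pow, map_sub, derivative_one]
    have hN : ((N + 1 : ℕ) : ℝ) ≠ 0 := by positivity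
    rw [mul_assoc, ← nsmul_eq_mul, ← Nat.cast_smul_eq_nsmul ℝ, smul_smul, neg_mul,
      inv_mul_cancel₀ hN, neg_smul, one_smul, Nat.add_sub_cancel]
    ring

lemma mul_derivative_flog {A : ℝ⟦X⟧} (hA : constantCoeff A = 1) :
    A * d⁄dX ℝ (flog A) = d⁄dX ℝ A := by
  ext m
  suffices X ^ (m + 1) ∣ A * d⁄dX ℝ (flog A) - d⁄dX ℝ A by
    exact sub_eq_zero.mp ((map_sub _ _ _).symm.trans (X_pow_dvd_iff.mp this m (by omega)))
  -- Modulo `X ^ (m + 2)`, `flog A` is a partial sum of `-∑ (1 - A)^k / k`, whose derivative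
  -- is a geometric series times `A'`.
  have hsplit : A * d⁄dX ℝ (flog A) - d⁄dX ℝ A =
      A * d⁄dX ℝ (flog A - flogPartial A (m + 1)) - (1 - A) ^ (m + 1) * d⁄dX ℝ A := by
    have hgeom := mul_neg_geom_sum (1 - A) (m + 1)
    rw [sub_sub_cancel] at hgeom
    rw [map_sub, derivative_flogPartial]
    linear_combination (d⁄dX ℝ A) * hgeom
  have hu : X ∣ 1 - A := X_dvd_iff.mpr (by simp [hA])
  rw [hsplit]
  exact dvd_sub (dvd_mul_of_dvd_right
    (X_pow_dvd_derivative (X_pow_dvd_flog_sub_flogPartial hA _)) _)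
    (dvd_mul_of_dvd_left (pow_dvd_pow_of_dvd hu _) _)

lemma coeff_derivative_flog (A : ℝ⟦X⟧) (n : ℕ) :
    coeff n (d⁄dX ℝ (flog A)) = -powSum A (n + 1) := by
  rw [coeff_derivative, powSum]; push_cast; ring

theorem powSum_add_mul_coeff {A : ℝ⟦X⟧} (hA : constantCoeff A = 1) (n : ℕ) :
    powSum A (n + 1) + (n + 1) * coeff (n + 1) A =
      -∑ j ∈ range n, coeff (j + 1) A * powSum A (n - j) := by
  have h := congrArg (coeff n) (mul_derivative_flog hA)
  rw [coeff_mul, Nat.sum_antidiagonal_eq_sum_range_succ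
    (fun i j => coeff i A * coeff j (d⁄dX ℝ (flog A))), sum_range_succ'] at h
  simp only [coeff_derivative_flog] at h
  rw [coeff_derivative, coeff_zero_eq_constantCoeff_apply, hA, Nat.sub_zero,
    sum_congr rfl fun k hk => by rw [show n - (k + 1) + 1 = n - k by simp at hk; omega]] at h
  simp only [mul_neg, sum_neg_distrib] at h
  linear_combination -h

/-- The paper's `U = 1 + zℝ⟦z⟧`. -/
abbrev U : Type := {A : ℝ⟦X⟧ // constantCoeff A = 1}

def powSumAlgebra (n : ℕ) : Subalgebra ℝ (U → ℝ) :=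
  Algebra.adjoin ℝ (Set.range fun j : Fin n => fun A : U => powSum A.1 (j + 1))

lemma powSumAlgebra_mono : Monotone powSumAlgebra := fun _ _ h =>
  Algebra.adjoin_mono (by rintro _ ⟨j, rfl⟩; exact ⟨Fin.castLE h j, rfl⟩)

lemma powSum_zero (A : ℝ⟦X⟧) : powSum A 0 = 0 := by simp [powSum]

lemma powSum_mem_powSumAlgebra {k n : ℕ} (h : k ≤ n) :
    (fun A : U => powSum A.1 k) ∈ powSumAlgebra n := by
  cases k with
  | zero => simp only [powSum_zero]; exact zero_mem _
  | succ k => exact Algebra.subset_adjoin ⟨⟨k, h⟩, rfl⟩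

lemma exists_eval_eq_of_mem_powSumAlgebra {n : ℕ} {f : U → ℝ} (hf : f ∈ powSumAlgebra n) :
    ∃ F : MvPolynomial (Fin n) ℝ,
      ∀ A : U, f A = MvPolynomial.eval (fun j : Fin n => powSum A.1 (j + 1)) F := by
  rw [powSumAlgebra, Algebra.adjoin_range_eq_range_aeval] at hf
  obtain ⟨F, rfl⟩ := hf
  exact ⟨F, fun A => MvPolynomial.comp_aeval_apply _ (Pi.evalAlgHom ℝ (fun _ : U => ℝ) A) F⟩

lemma coeff_mem_powSumAlgebra (n : ℕ) : (fun A : U => coeff n A.1) ∈ powSumAlgebra n := by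
  induction n using Nat.strong_induction_on with | _ n ih =>
  cases n with
  | zero =>
    have h : (fun A : U => coeff 0 A.1) = 1 := funext fun A => by simpa using A.2
    exact h ▸ one_mem _
  | succ n =>
    have h : (fun A : U => coeff (n + 1) A.1) = (-(n + 1 : ℝ)⁻¹) •
        ((fun A : U => powSum A.1 (n + 1)) +
          ∑ j ∈ range n,
            (fun A : U => coeff (j + 1) A.1) * fun A : U => powSum A.1 (n - j)) := by
      funext A
      have := powSum_add_mul_coeff A.2 n
      simp only [Pi.smul_apply, Pi.add_apply, Finset.sum_apply, Pi.mul_apply, smul_eq_mul]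
      field_simp
      linear_combination this
    rw [h]
    refine Subalgebra.smul_mem _ (add_mem (powSum_mem_powSumAlgebra le_rfl) (sum_mem fun j hj =>
      mul_mem ?_ (powSum_mem_powSumAlgebra (by omega : n - j ≤ n + 1)))) _
    have hjn := mem_range.mp hj
    exact powSumAlgebra_mono (by omega) (ih (j + 1) (by omega))

lemma coeff_Et (t : ℝ) (A : ℝ⟦X⟧) (k : ℕ) :
    coeff k (Et t A) = t ^ k / ffall t k * coeff k A :=
  coeff_mk _ _

lemma constantCoeff_Et (t : ℝ) {A : ℝ⟦X⟧} (hA : constantCoeff A = 1) :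
    constantCoeff (Et t A) = 1 := by
  simp [← coeff_zero_eq_constantCoeff_apply, coeff_Et, ffall, hA]

lemma powSum_Et_sub {t : ℝ} {A : ℝ⟦X⟧} (hA : constantCoeff A = 1) (n : ℕ) :
    powSum (Et t A) (n + 1) - t ^ (n + 1) / ffall t (n + 1) * powSum A (n + 1) =
      t ^ (n + 1) / ffall t (n + 1) * ∑ j ∈ range n, coeff (j + 1) A * powSum A (n - j) -
        ∑ j ∈ range n,
          t ^ (j + 1) / ffall t (j + 1) * (coeff (j + 1) A * powSum (Et t A) (n - j)) := by
  have hE := powSum_add_mul_coeff (constantCoeff_Et t hA) n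
  simp only [coeff_Et, mul_assoc] at hE
  linear_combination hE - t ^ (n + 1) / ffall t (n + 1) * powSum_add_mul_coeff hA n

lemma powSum_Et_sub_mem_of {t : ℝ} {n : ℕ}
    (h : ∀ k ≤ n, (fun A : U => powSum (Et t A.1) k) ∈ powSumAlgebra n) :
    (fun A : U => powSum (Et t A.1) (n + 1)) -
      (t ^ (n + 1) / ffall t (n + 1)) • (fun A : U => powSum A.1 (n + 1)) ∈
        powSumAlgebra n := by
  have hcoeff : ∀ j ∈ range n, (fun A : U => coeff (j + 1) A.1) ∈ powSumAlgebra n :=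
    fun j hj => powSumAlgebra_mono (by simp at hj; omega) (coeff_mem_powSumAlgebra _)
  have heq : (fun A : U => powSum (Et t A.1) (n + 1)) -
      (t ^ (n + 1) / ffall t (n + 1)) • (fun A : U => powSum A.1 (n + 1)) =
      (t ^ (n + 1) / ffall t (n + 1)) • ∑ j ∈ range n,
          (fun A : U => coeff (j + 1) A.1) * (fun A : U => powSum A.1 (n - j)) -
        ∑ j ∈ range n, (t ^ (j + 1) / ffall t (j + 1)) •
          ((fun A : U => coeff (j + 1) A.1) * fun A : U => powSum (Et t A.1) (n - j)) := by
    funext A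
    simp only [Pi.sub_apply, Pi.smul_apply, Finset.sum_apply, Pi.mul_apply, smul_eq_mul]
    exact powSum_Et_sub A.2 n
  rw [heq]
  exact sub_mem
    (Subalgebra.smul_mem _ (sum_mem fun j hj =>
      mul_mem (hcoeff j hj) (powSum_mem_powSumAlgebra (by omega : n - j ≤ n))) _)
    (sum_mem fun j hj =>
      Subalgebra.smul_mem _ (mul_mem (hcoeff j hj) (h _ (by omega : n - j ≤ n))) _)

lemma powSum_Et_mem (t : ℝ) (n : ℕ) :
    (fun A : U => powSum (Et t A.1) n) ∈ powSumAlgebra n := by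
  induction n using Nat.strong_induction_on with | _ n ih =>
  cases n with
  | zero => simp only [powSum_zero]; exact zero_mem _
  | succ n =>
    have hsub := powSum_Et_sub_mem_of fun k (hk : k ≤ n) =>
      powSumAlgebra_mono hk (ih k (by omega))
    simpa using add_mem (powSumAlgebra_mono n.le_succ hsub)
      (Subalgebra.smul_mem _ (powSum_mem_powSumAlgebra le_rfl) (t ^ (n + 1) / ffall t (n + 1)))

lemma kappa_eq_inv_mul_powSum_Et (t : ℝ) (A : ℝ⟦X⟧) (i : ℕ) :
    kappa t A i = t⁻¹ * powSum (Et t A) i := by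
  rw [kappa, Ct, coeff_mk, powSum]
  ring

/-- For `t ∈ ℝ \ ℤ_{≥0}` and `i ≥ 1`, there is a polynomial `F_i` in `i-1` variables
such that for every `A ∈ U`,
`κ_i^t(A) = (t^{i-1}/(t)_i) p_i(A) + F_i(p_1(A), …, p_{i-1}(A))`. -/
theorem kappa_polynomial_in_powSums (t : ℝ) (ht : ∀ n : ℕ, t ≠ (n : ℝ))
    (i : ℕ) (hi : 1 ≤ i) :
    ∃ F : MvPolynomial (Fin (i - 1)) ℝ,
      ∀ A : PowerSeries ℝ, PowerSeries.constantCoeff A = 1 →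
        kappa t A i =
          t ^ (i - 1) / ffall t i * powSum A i +
            MvPolynomial.eval (fun j : Fin (i - 1) => powSum A (j.val + 1)) F := by
  obtain ⟨n, rfl⟩ := Nat.exists_eq_add_of_le' hi
  dsimp only [Nat.add_one_sub_one]
  have ht0 : t ≠ 0 := by exact_mod_cast ht 0
  obtain ⟨F, hF⟩ := exists_eval_eq_of_mem_powSumAlgebra <| Subalgebra.smul_mem _
    (powSum_Et_sub_mem_of (n := n) fun k hk => powSumAlgebra_mono hk (powSum_Et_mem t k)) t⁻¹
  refine ⟨F, fun A hA => ?_⟩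
  have hFA := hF ⟨A, hA⟩
  simp only [Pi.smul_apply, Pi.sub_apply, smul_eq_mul] at hFA
  have hc : t⁻¹ * (t ^ (n + 1) / ffall t (n + 1)) = t ^ n / ffall t (n + 1) := by
    rw [pow_succ]; field_simp
  rw [kappa_eq_inv_mul_powSum_Et]
  linear_combination hFA + powSum A (n + 1) * hc
end

section
/- For t ∈ ℝ \ ℤ_{≥0}, the t-deformed cumulant transform of the t-deformed Hermite series H^{(t)}(z) := 1 + Σ_{k≥1} (−1)^k ((t)_{2k}/(t^k (2k)!!)) z^{2k} satisfies C^t[H^{(t)}](z) = z^2; equivalently, κ_2^t(H^{(t)}) = 1 and κ_n^t(H^{(t)}) = 0 for all n ≠ 2. -/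
/-!
`E^t` turns the Hermite series into the Gaussian `G(z) = Σ_k (-t/2)^k z^{2k} / k!`, since
`(t)_{2k}` cancels and `t^{2k} / t^k = t^k`. The Gaussian solves `G' = -t z G`, and the formal
logarithm satisfies `A · (log A)' = A'`, so `(log G)' = -t z` and `-(z/t) (log G)' = z²`.
-/

open PowerSeries Finset

/-- The `t`-deformed Hermite series
`H^{(t)}(z) = 1 + Σ_{k≥1} (-1)^k ((t)_{2k}/(t^k (2k)!!)) z^{2k}`, with `(2k)!! = 2^k k!`. -/
noncomputable def Ht (t : ℝ) : PowerSeries ℝ :=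
  PowerSeries.mk fun n =>
    if Even n then
      (-1) ^ (n / 2) * ffall t n / (t ^ (n / 2) * (2 ^ (n / 2) * ((n / 2).factorial : ℝ)))
    else 0

lemma coeff_pow_one_sub_of_lt {R : Type*} [CommRing R] {A : R⟦X⟧} (hA : constantCoeff A = 1)
    {m k : ℕ} (h : m < k) : coeff m ((1 - A) ^ k) = 0 := by
  have hX : (X : R⟦X⟧) ∣ 1 - A := X_dvd_iff.mpr (by simp [hA])
  exact X_pow_dvd_iff.mp (pow_dvd_pow_of_dvd hX k) m h

noncomputable def flogTrunc (A : ℝ⟦X⟧) (N : ℕ) : ℝ⟦X⟧ :=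
  ∑ k ∈ range (N + 1), (-(1 : ℝ) / k) • (1 - A) ^ k

lemma coeff_flog_eq_coeff_flogTrunc {A : ℝ⟦X⟧} (hA : constantCoeff A = 1) {m N : ℕ}
    (h : m ≤ N) : coeff m (flog A) = coeff m (flogTrunc A N) := by
  rw [flog, coeff_mk, flogTrunc, map_sum]
  simp only [coeff_smul, smul_eq_mul]
  rw [← sum_subset (range_subset_range.2 (by omega) : range (m + 1) ⊆ range (N + 1)),
    ← sum_neg_distrib]
  · exact sum_congr rfl fun k _ => by ring
  · intro k _ hk
    rw [coeff_pow_one_sub_of_lt hA (by simpa using hk), mul_zero]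

lemma derivative_flogTrunc (A : ℝ⟦X⟧) (N : ℕ) :
    d⁄dX ℝ (flogTrunc A N) = (∑ j ∈ range N, (1 - A) ^ j) * d⁄dX ℝ A := by
  have hterm : ∀ j : ℕ, d⁄dX ℝ ((-(1 : ℝ) / (j + 1 : ℕ)) • (1 - A) ^ (j + 1))
      = (1 - A) ^ j * d⁄dX ℝ A := by
    intro j
    have hj : ((j + 1 : ℕ) : ℝ) ≠ 0 := Nat.cast_ne_zero.2 j.succ_ne_zero
    rw [Derivation.map_smul, Derivation.leibniz_pow, ← Nat.cast_smul_eq_nsmul ℝ, smul_smul,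
      div_mul_cancel₀ _ hj, map_sub, Derivation.map_one_eq_zero, zero_sub, Nat.add_sub_cancel,
      neg_one_smul, smul_neg, neg_neg, smul_eq_mul]
  rw [flogTrunc, map_sum, sum_range_succ', sum_mul]
  simp only [hterm, Nat.cast_zero, div_zero, zero_smul, map_zero, add_zero]

lemma mul_derivative_flogTrunc (A : ℝ⟦X⟧) (N : ℕ) :
    A * d⁄dX ℝ (flogTrunc A N) = d⁄dX ℝ A - (1 - A) ^ N * d⁄dX ℝ A := by
  have hgeom := mul_neg_geom_sum (1 - A) N
  rw [sub_sub_cancel] at hgeom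
  rw [derivative_flogTrunc, ← mul_assoc, hgeom, sub_mul, one_mul]

lemma Ct_eq_smul_X_mul_derivative (t : ℝ) (A : ℝ⟦X⟧) :
    Ct t A = (-(1 / t)) • (X * d⁄dX ℝ (flog (Et t A))) := by
  ext n
  rw [Ct, coeff_mk, coeff_smul, smul_eq_mul]
  cases n with
  | zero => simp
  | succ m =>
    rw [coeff_succ_X_mul, coeff_derivative]
    push_cast
    ring

lemma ffall_ne_zero {t : ℝ} (ht : ∀ n : ℕ, t ≠ n) (k : ℕ) : ffall t k ≠ 0 :=
  prod_ne_zero_iff.2 fun i _ => sub_ne_zero.2 (ht i)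

noncomputable def gaussSeries (c : ℝ) : ℝ⟦X⟧ :=
  mk fun n => if Even n then c ^ (n / 2) / ((n / 2).factorial : ℝ) else 0

lemma constantCoeff_gaussSeries (c : ℝ) : constantCoeff (gaussSeries c) = 1 := by
  simp [← coeff_zero_eq_constantCoeff_apply, gaussSeries]

lemma derivative_gaussSeries (c : ℝ) :
    d⁄dX ℝ (gaussSeries c) = (2 * c) • (X * gaussSeries c) := by
  ext n
  rw [coeff_derivative, coeff_smul, smul_eq_mul]
  cases n with
  | zero => simp [gaussSeries]
  | succ m =>
    rw [coeff_succ_X_mul]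
    rcases Nat.even_or_odd m with ⟨k, rfl⟩ | hodd
    · have h1 : (k + k + 1 + 1) / 2 = k + 1 := by omega
      have h2 : (k + k) / 2 = k := by omega
      simp only [gaussSeries, coeff_mk, show Even (k + k + 1 + 1) from ⟨k + 1, by ring⟩,
        Even.add_self, if_true, h1, h2, Nat.factorial_succ]
      push_cast
      field_simp
      ring
    · have hodd' : ¬Even (m + 1 + 1) :=
        Nat.not_even_iff_odd.2 (by simpa [parity_simps] using hodd)
      simp [gaussSeries, hodd', Nat.not_even_iff_odd.2 hodd]

lemma derivative_flog_gaussSeries (c : ℝ) :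
    d⁄dX ℝ (flog (gaussSeries c)) = (2 * c) • (X : ℝ⟦X⟧) := by
  have hG : gaussSeries c ≠ 0 := fun h => by
    simpa [h] using constantCoeff_gaussSeries c
  refine mul_left_cancel₀ hG ?_
  rw [mul_derivative_flog (constantCoeff_gaussSeries c), derivative_gaussSeries, mul_smul_comm,
    mul_comm X]

lemma Et_Ht {t : ℝ} (ht : ∀ n : ℕ, t ≠ n) : Et t (Ht t) = gaussSeries (-t / 2) := by
  ext n
  rw [Et, Ht, gaussSeries, coeff_mk, coeff_mk, coeff_mk]
  rcases Nat.even_or_odd n with ⟨k, rfl⟩ | hodd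
  · have hk : (k + k) / 2 = k := by omega
    have hff := ffall_ne_zero ht (k + k)
    have ht0 : t ≠ 0 := by simpa using ht 0
    simp only [Even.add_self k, if_true, hk]
    rw [div_pow, neg_pow t k, pow_add t k k]
    field_simp
  · simp [Nat.not_even_iff_odd.2 hodd]

/-- `C^t[H^{(t)}](z) = z²`; equivalently `κ_2^t(H^{(t)}) = 1` and
`κ_n^t(H^{(t)}) = 0` for all `n ≠ 2`. -/
theorem Ct_Ht (t : ℝ) (ht : ∀ n : ℕ, t ≠ (n : ℝ)) :
    Ct t (Ht t) = PowerSeries.X ^ 2 ∧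
    kappa t (Ht t) 2 = 1 ∧
    ∀ n : ℕ, n ≠ 2 → kappa t (Ht t) n = 0 := by
  have ht0 : t ≠ 0 := by simpa using ht 0
  have hC : Ct t (Ht t) = X ^ 2 := by
    rw [Ct_eq_smul_X_mul_derivative, Et_Ht ht, derivative_flog_gaussSeries, mul_smul_comm,
      smul_smul, mul_div_cancel₀ _ (two_ne_zero : (2 : ℝ) ≠ 0), neg_mul_neg, one_div,
      inv_mul_cancel₀ ht0, one_smul, sq]
  exact ⟨hC, by simp [kappa, hC, coeff_X_pow], fun n hn => by simp [kappa, hC, coeff_X_pow, hn]⟩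
end
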